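/- Let f ∈ F_q[t] be a nonzero polynomial. Then f is a fixed point of the Smarandache function (i.e. S(f) = f) if and only if f = t in the case q > 2, and if and only if f = t or f = t² in the case q = 2. -/

import Mathlib

open Polynomial Finset
set_option linter.unusedSectionVars false
set_option linter.unusedVariables false
set_option maxHeartbeats 1000000

lemma digit_sum_lt (q : ℕ) (hq : 1 < q) (d : ℕ → ℕ) (hd : ∀ j, d j < q) (t : ℕ) :
    ∑ j ∈ Finset.range t, d j * q ^ j < q ^ t := by
  induction t with
  | zero => simp
  | succ t ih =>
    rw [Finset.sum_range_succ, pow_succ]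
    have h1 : d t + 1 ≤ q := hd t
    nlinarith [pow_pos (by omega : 0 < q) t]

lemma digit_extract (q : ℕ) (hq : 1 < q) :
    ∀ (i t : ℕ) (d : ℕ → ℕ), (∀ j, d j < q) →
      (∑ j ∈ Finset.range t, d j * q ^ j) / q ^ i % q = if i < t then d i else 0 := by
  intro i
  induction i with
  | zero =>
    intro t d hd
    cases t with
    | zero => simp
    | succ t =>
      rw [Finset.sum_range_succ']
      have h : ∑ j ∈ Finset.range t, d (j + 1) * q ^ (j + 1)
          = (∑ j ∈ Finset.range t, d (j + 1) * q ^ j) * q := by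
        rw [Finset.sum_mul]; apply Finset.sum_congr rfl; intro j _; ring
      simp only [pow_zero, Nat.div_one, mul_one, h]
      rw [Nat.add_comm, Nat.add_mul_mod_self_right, Nat.mod_eq_of_lt (hd 0)]
      simp
  | succ i ih =>
    intro t d hd
    cases t with
    | zero => simp
    | succ t =>
      rw [Finset.sum_range_succ']
      have h : ∑ j ∈ Finset.range t, d (j + 1) * q ^ (j + 1)
          = q * ∑ j ∈ Finset.range t, d (j + 1) * q ^ j := by
        rw [Finset.mul_sum]; apply Finset.sum_congr rfl; intro j _; ring
      have hq0 : 0 < q := by omega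
      simp only [pow_zero, mul_one, h]
      rw [pow_succ', ← Nat.div_div_eq_div_mul,
        Nat.mul_add_div hq0, Nat.div_eq_of_lt (hd 0), Nat.add_zero,
        ih t (fun j => d (j + 1)) (fun j => hd (j + 1))]
      simp [Nat.succ_lt_succ_iff]

lemma sum_digits_eq_mod (q m : ℕ) (t : ℕ) :
    ∑ j ∈ Finset.range t, (m / q ^ j % q) * q ^ j = m % q ^ t := by
  induction t with
  | zero => simp [Nat.mod_one]
  | succ t ih => rw [Finset.sum_range_succ, ih, Nat.mod_pow_succ]; ring

lemma nq_lt_pow (q n : ℕ) (hq : 2 ≤ q) (hn : 2 ≤ n) (h3 : 3 ≤ q ∨ 3 ≤ n) :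
    n * q < q ^ n := by
  have hq0 : 0 < q := by omega
  rcases h3 with h3 | h3
  · clear hq
    induction n with
    | zero => omega
    | succ k ih =>
      rcases Nat.lt_or_ge k 2 with h | h
      · have hk : k = 1 := by omega
        subst hk
        have he : q ^ (1 + 1) = q * q := by ring
        rw [he]
        exact (Nat.mul_lt_mul_right hq0).mpr (by omega)
      · have hik := ih (by omega)
        have he : q ^ (k + 1) = q ^ k * q := by ring
        rw [he]
        calc (k + 1) * q ≤ (k * q) * q :=
              Nat.mul_le_mul_right _ (by nlinarith)
          _ < q ^ k * q := (Nat.mul_lt_mul_right hq0).mpr hik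
  · clear hn
    induction n with
    | zero => omega
    | succ k ih =>
      rcases Nat.lt_or_ge k 3 with h | h
      · have hk : k = 2 := by omega
        subst hk
        have he : q ^ (2 + 1) = (q * q) * q := by ring
        rw [he]
        exact (Nat.mul_lt_mul_right hq0).mpr (by nlinarith)
      · have hik := ih (by omega)
        have he : q ^ (k + 1) = q ^ k * q := by ring
        rw [he]
        calc (k + 1) * q ≤ (k * q) * q :=
              Nat.mul_le_mul_right _ (by nlinarith)
          _ < q ^ k * q := (Nat.mul_lt_mul_right hq0).mpr hik

variable {F : Type*} [Field F] [Fintype F] [DecidableEq F]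

/-- `delta a f` is the natural number attached to the polynomial `f` via the
enumeration `a : Fin q ≃ F` of the field (`q = Fintype.card F`): if
`f = a_{i_0} + a_{i_1} t + ⋯ + a_{i_n} t^n` then `delta a f = i_0 + i_1 q + ⋯ + i_n q^n`.
In particular `delta a 0 = 0` whenever `a 0 = 0`. -/
noncomputable def delta (a : Fin (Fintype.card F) ≃ F) (f : F[X]) : ℕ :=
  ∑ j ∈ Finset.range (f.natDegree + 1), (a.symm (f.coeff j) : ℕ) * Fintype.card F ^ j

/-- The inverse of `delta`: the polynomial whose `j`-th coefficient is the `j`-th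
base-`q` digit of `m` (under the enumeration `a`). -/
noncomputable def deltaInv (a : Fin (Fintype.card F) ≃ F) (m : ℕ) : F[X] :=
  ∑ j ∈ Finset.range (m + 1),
    C (a ⟨m / Fintype.card F ^ j % Fintype.card F, Nat.mod_lt _ Fintype.card_pos⟩) * X ^ j


section Core
variable (a : Fin (Fintype.card F) ≃ F)

local notation "q" => Fintype.card F

lemma a_mk_zero (h0 : a 0 = 0) (h : 0 < q) : a ⟨0, h⟩ = 0 := by
  have : (⟨0, h⟩ : Fin q) = 0 := by ext; simp
  rw [this, h0]

lemma asymm_val_zero (h0 : a 0 = 0) : ((a.symm 0 : Fin q) : ℕ) = 0 := by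
  rw [← h0, Equiv.symm_apply_apply]
  simp

lemma coeff_deltaInv (h0 : a 0 = 0) (m i : ℕ) :
    (deltaInv a m).coeff i = a ⟨m / q ^ i % q, Nat.mod_lt _ Fintype.card_pos⟩ := by
  rw [deltaInv, Polynomial.finset_sum_coeff]
  simp only [coeff_C_mul, coeff_X_pow, mul_ite, mul_one, mul_zero]
  rw [Finset.sum_ite_eq (Finset.range (m + 1)) i]
  by_cases hi : i ∈ Finset.range (m + 1)
  · simp [hi]
  · simp only [hi, if_false]
    have hlt : m < q ^ i := by
      simp only [Finset.mem_range, not_lt] at hi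
      calc m < 2 ^ (m + 1) := by
              have := Nat.lt_two_pow_self (n := m)
              have h2 : (2:ℕ) ^ m ≤ 2 ^ (m + 1) := Nat.pow_le_pow_right (by omega) (by omega)
              omega
        _ ≤ 2 ^ i := Nat.pow_le_pow_right (by omega) hi
        _ ≤ q ^ i := Nat.pow_le_pow_left Fintype.one_lt_card i
    have hdiv : m / q ^ i = 0 := Nat.div_eq_of_lt hlt
    have : (⟨m / q ^ i % q, Nat.mod_lt _ Fintype.card_pos⟩ : Fin q)
        = ⟨0, Fintype.card_pos⟩ := Fin.ext (by simp [hdiv])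
    rw [this, a_mk_zero a h0]

lemma natDegree_deltaInv_le (m : ℕ) : (deltaInv a m).natDegree ≤ m := by
  rw [deltaInv]
  apply Polynomial.natDegree_sum_le_of_forall_le
  intro j hj
  apply le_trans (Polynomial.natDegree_C_mul_le _ _)
  simp only [natDegree_X_pow]
  simpa using Nat.lt_succ_iff.mp (Finset.mem_range.mp hj)

lemma delta_eq_sum (h0 : a 0 = 0) (f : F[X]) {t : ℕ} (ht : f.natDegree < t) :
    delta a f = ∑ j ∈ Finset.range t, (a.symm (f.coeff j) : ℕ) * q ^ j := by
  rw [delta]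
  apply Finset.sum_subset (Finset.range_subset_range.mpr ht)
  intro j _ hj
  simp only [Finset.mem_range, not_lt] at hj
  rw [coeff_eq_zero_of_natDegree_lt (by omega), asymm_val_zero a h0, zero_mul]

lemma delta_deltaInv (h0 : a 0 = 0) (m : ℕ) : delta a (deltaInv a m) = m := by
  rw [delta_eq_sum a h0 _ (Nat.lt_succ_of_le (natDegree_deltaInv_le a m))]
  have hc : ∀ j, ((a.symm ((deltaInv a m).coeff j) : Fin q) : ℕ) = m / q ^ j % q := by
    intro j
    rw [coeff_deltaInv a h0, Equiv.symm_apply_apply]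
  simp only [hc]
  rw [sum_digits_eq_mod]
  apply Nat.mod_eq_of_lt
  calc m < 2 ^ (m + 1) := by
        have := Nat.lt_two_pow_self (n := m)
        have h2 : (2:ℕ) ^ m ≤ 2 ^ (m + 1) := Nat.pow_le_pow_right (by omega) (by omega)
        omega
    _ ≤ q ^ (m + 1) := Nat.pow_le_pow_left Fintype.one_lt_card _

lemma deltaInv_delta (h0 : a 0 = 0) (f : F[X]) : deltaInv a (delta a f) = f := by
  ext i
  rw [coeff_deltaInv a h0]
  have hd : ∀ j, ((a.symm (f.coeff j) : Fin q) : ℕ) < q := fun j => (a.symm (f.coeff j)).isLt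
  have he : delta a f / q ^ i % q
      = if i < f.natDegree + 1 then ((a.symm (f.coeff i) : Fin q) : ℕ) else 0 := by
    rw [delta]
    exact digit_extract q Fintype.one_lt_card i (f.natDegree + 1) _ hd
  by_cases hi : i < f.natDegree + 1
  · rw [if_pos hi] at he
    have : (⟨delta a f / q ^ i % q, Nat.mod_lt _ Fintype.card_pos⟩ : Fin q)
        = a.symm (f.coeff i) := Fin.ext (by simp [he])
    rw [this, Equiv.apply_symm_apply]
  · rw [if_neg hi] at he
    have : (⟨delta a f / q ^ i % q, Nat.mod_lt _ Fintype.card_pos⟩ : Fin q)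
        = ⟨0, Fintype.card_pos⟩ := Fin.ext (by simp [he])
    rw [this, a_mk_zero a h0, coeff_eq_zero_of_natDegree_lt (by omega)]

lemma delta_zero (h0 : a 0 = 0) : delta a (0 : F[X]) = 0 := by
  simp [delta, asymm_val_zero a h0]

lemma deltaInv_zero (h0 : a 0 = 0) : deltaInv a 0 = 0 := by
  have := deltaInv_delta a h0 (0 : F[X])
  rwa [delta_zero a h0] at this

lemma delta_pos (h0 : a 0 = 0) {f : F[X]} (hf : f ≠ 0) : 0 < delta a f := by
  rcases Nat.eq_zero_or_pos (delta a f) with h | h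
  · exfalso
    apply hf
    have := deltaInv_delta a h0 f
    rw [h, deltaInv_zero a h0] at this
    exact this.symm
  · exact h

lemma delta_injective (h0 : a 0 = 0) {f g : F[X]} (h : delta a f = delta a g) : f = g := by
  have := deltaInv_delta a h0 f
  rw [h, deltaInv_delta a h0 g] at this
  exact this.symm

end Core

/-- The factorial of a polynomial: `f! = ∏_{g < f} (f - g)`, the product over all
polynomials `g` with `delta a g < delta a f`; in particular `0! = 1`. -/
noncomputable def pfact (a : Fin (Fintype.card F) ≃ F) (f : F[X]) : F[X] :=
  ∏ m ∈ Finset.range (delta a f), (f - deltaInv a m)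

/-- The Smarandache function: `S a 0 = 0`, and for `f ≠ 0`, `S a f` is the smallest
polynomial `g` (in the order given by `delta`) such that `f ∣ g!`. -/
noncomputable def S (a : Fin (Fintype.card F) ≃ F) (f : F[X]) : F[X] :=
  if f = 0 then 0 else deltaInv a (sInf {m : ℕ | f ∣ pfact a (deltaInv a m)})


section Core2
variable (a : Fin (Fintype.card F) ≃ F)

local notation "q" => Fintype.card F

lemma pfact_deltaInv (h0 : a 0 = 0) (m : ℕ) :
    pfact a (deltaInv a m) = ∏ k ∈ Finset.range m, (deltaInv a m - deltaInv a k) := by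
  rw [pfact, delta_deltaInv a h0]

lemma dvd_pfact_self (h0 : a 0 = 0) {f : F[X]} (hf : f ≠ 0) : f ∣ pfact a f := by
  rw [pfact]
  have h0m : 0 ∈ Finset.range (delta a f) := Finset.mem_range.mpr (delta_pos a h0 hf)
  have := Finset.dvd_prod_of_mem (fun m => f - deltaInv a m) h0m
  simpa [deltaInv_zero a h0] using this

lemma fixed_iff (h0 : a 0 = 0) {f : F[X]} (hf : f ≠ 0) :
    S a f = f ↔ ∀ m < delta a f, ¬ f ∣ pfact a (deltaInv a m) := by
  rw [S, if_neg hf]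
  set M := {m : ℕ | f ∣ pfact a (deltaInv a m)} with hM
  have hmem : delta a f ∈ M := by
    show f ∣ pfact a (deltaInv a (delta a f))
    rw [deltaInv_delta a h0]
    exact dvd_pfact_self a h0 hf
  constructor
  · intro h m hm hdvd
    have h1 : sInf M ≤ m := Nat.sInf_le hdvd
    have h2 : sInf M = delta a f := by
      have := congrArg (delta a) h
      rwa [delta_deltaInv a h0] at this
    omega
  · intro h
    have h1 : sInf M ≤ delta a f := Nat.sInf_le hmem
    have h2 : sInf M ∈ M := Nat.sInf_mem ⟨_, hmem⟩
    have h3 : ¬ sInf M < delta a f := fun hlt => h _ hlt h2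
    have h4 : sInf M = delta a f := by omega
    rw [h4, deltaInv_delta a h0]

lemma delta_C_mul_X_pow (h0 : a 0 = 0) {c : F} (hc : c ≠ 0) (n : ℕ) :
    delta a (C c * X ^ n) = ((a.symm c : Fin q) : ℕ) * q ^ n := by
  rw [delta, natDegree_C_mul_X_pow n c hc, Finset.sum_eq_single n]
  · rw [coeff_C_mul, coeff_X_pow, if_pos rfl, mul_one]
  · intro j hj hne
    rw [coeff_C_mul, coeff_X_pow, if_neg hne, mul_zero, asymm_val_zero a h0, zero_mul]
  · intro h
    exact absurd (Finset.self_mem_range_succ n) h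

lemma val_one_fin (h : 1 < q) : ((1 : Fin q) : ℕ) = 1 := by
  rw [Fin.val_one']
  exact Nat.mod_eq_of_lt h

lemma delta_X_pow (h0 : a 0 = 0) (h1 : a 1 = 1) (n : ℕ) :
    delta a ((X : F[X]) ^ n) = q ^ n := by
  have he : (X ^ n : F[X]) = C 1 * X ^ n := by rw [map_one, one_mul]
  rw [he, delta_C_mul_X_pow a h0 one_ne_zero, ← h1, Equiv.symm_apply_apply,
    val_one_fin Fintype.one_lt_card, one_mul]

lemma delta_X (h0 : a 0 = 0) (h1 : a 1 = 1) : delta a (X : F[X]) = q := by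
  have := delta_X_pow a h0 h1 1
  rwa [pow_one, pow_one] at this

lemma le_delta (h0 : a 0 = 0) {f : F[X]} (hf : f ≠ 0) : q ^ f.natDegree ≤ delta a f := by
  have hc : f.coeff f.natDegree ≠ 0 := by
    rw [← Polynomial.leadingCoeff]
    exact Polynomial.leadingCoeff_ne_zero.mpr hf
  have hval : 1 ≤ ((a.symm (f.coeff f.natDegree) : Fin q) : ℕ) := by
    rcases Nat.eq_zero_or_pos ((a.symm (f.coeff f.natDegree) : Fin q) : ℕ) with h | h
    · exfalso
      apply hc
      have he : a.symm (f.coeff f.natDegree) = ⟨0, Fintype.card_pos⟩ := Fin.ext (by simpa using h)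
      have := congrArg a he
      rwa [Equiv.apply_symm_apply, a_mk_zero a h0] at this
    · exact h
  calc q ^ f.natDegree = 1 * q ^ f.natDegree := (one_mul _).symm
    _ ≤ ((a.symm (f.coeff f.natDegree) : Fin q) : ℕ) * q ^ f.natDegree :=
        Nat.mul_le_mul_right _ hval
    _ ≤ delta a f := Finset.single_le_sum (f := fun j => ((a.symm (f.coeff j) : Fin q) : ℕ) * q ^ j)
        (fun i _ => Nat.zero_le _) (Finset.self_mem_range_succ _)

lemma delta_lt_pow (h0 : a 0 = 0) (f : F[X]) {t : ℕ} (ht : f.natDegree < t) :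
    delta a f < q ^ t := by
  rw [delta_eq_sum a h0 f ht]
  exact digit_sum_lt _ Fintype.one_lt_card _ (fun j => Fin.isLt _) t


lemma asymm_val_pos (h0 : a 0 = 0) {c : F} (hc : c ≠ 0) :
    0 < ((a.symm c : Fin q) : ℕ) := by
  rcases Nat.eq_zero_or_pos ((a.symm c : Fin q) : ℕ) with h | h
  · exfalso
    apply hc
    have he : a.symm c = ⟨0, Fintype.card_pos⟩ := Fin.ext (by simpa using h)
    have := congrArg a he
    rwa [Equiv.apply_symm_apply, a_mk_zero a h0] at this
  · exact h

lemma a_mk_one (h1 : a 1 = 1) (h : 1 < q) : a ⟨1, h⟩ = 1 := by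
  have : (⟨1, h⟩ : Fin q) = 1 := Fin.ext (by rw [val_one_fin h])
  rw [this, h1]

lemma not_fixed_of_dvd (h0 : a 0 = 0) {f : F[X]} (hf : f ≠ 0) {m : ℕ}
    (hm : m < delta a f) (hd : f ∣ pfact a (deltaInv a m)) : S a f ≠ f := by
  intro h
  exact (fixed_iff a h0 hf).mp h m hm hd

lemma not_fixed_unit (h0 : a 0 = 0) {f : F[X]} (hf : f ≠ 0) (hdeg : f.natDegree = 0) :
    S a f ≠ f := by
  apply not_fixed_of_dvd a h0 hf (delta_pos a h0 hf)
  rw [deltaInv_zero a h0, pfact, delta_zero a h0]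
  simp only [Finset.range_zero, Finset.prod_empty]
  have hc : f.coeff 0 ≠ 0 := by
    intro h
    apply hf
    rw [Polynomial.eq_C_of_natDegree_eq_zero hdeg, h, map_zero]
  have : IsUnit f := by
    rw [Polynomial.eq_C_of_natDegree_eq_zero hdeg]
    exact Polynomial.isUnit_C.mpr (isUnit_iff_ne_zero.mpr hc)
  exact this.dvd

lemma not_fixed_middle (h0 : a 0 = 0) {f : F[X]} {j : ℕ} (hj : j < f.natDegree)
    (hc : f.coeff j ≠ 0) : S a f ≠ f := by
  set n := f.natDegree with hn
  set c := f.coeff j with hcdef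
  have hf : f ≠ 0 := fun h => hc (by rw [hcdef, h, coeff_zero])
  set g : F[X] := f - C c * X ^ j with hg
  have hgco : ∀ i, g.coeff i = if i = j then 0 else f.coeff i := by
    intro i
    rw [hg, coeff_sub, coeff_C_mul, coeff_X_pow]
    by_cases h : i = j
    · subst h; simp [hcdef]
    · simp [h]
  have hgn : g.coeff n = f.coeff n := by
    rw [hgco, if_neg (by omega)]
  have hfn : f.coeff n ≠ 0 := by
    rw [hn, ← Polynomial.leadingCoeff]
    exact Polynomial.leadingCoeff_ne_zero.mpr hf
  have hgne : g ≠ 0 := fun h => hfn (by rw [← hgn, h, coeff_zero])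
  have hdegg : g.natDegree = n := by
    apply le_antisymm
    · apply le_trans (Polynomial.natDegree_sub_le f (C c * X ^ j))
      rw [Polynomial.natDegree_C_mul_X_pow j c hc]
      simp only [sup_le_iff]
      omega
    · exact Polynomial.le_natDegree_of_ne_zero (by rw [hgn]; exact hfn)
  have hjmem : j ∈ Finset.range (n + 1) := Finset.mem_range.mpr (by omega)
  have hdf : delta a f
      = (∑ i ∈ (Finset.range (n + 1)).erase j, ((a.symm (f.coeff i) : Fin q) : ℕ) * q ^ i)
        + ((a.symm c : Fin q) : ℕ) * q ^ j := by
    rw [delta, ← Finset.sum_erase_add _ _ hjmem, hcdef]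
  have hdg : delta a g
      = ∑ i ∈ (Finset.range (n + 1)).erase j, ((a.symm (f.coeff i) : Fin q) : ℕ) * q ^ i := by
    rw [delta_eq_sum a h0 g (t := n + 1) (by rw [hdegg]; omega), ← Finset.sum_erase_add _ _ hjmem]
    have hz : ((a.symm (g.coeff j) : Fin q) : ℕ) = 0 := by
      rw [hgco, if_pos rfl, asymm_val_zero a h0]
    rw [hz, zero_mul, add_zero]
    apply Finset.sum_congr rfl
    intro i hi
    rw [hgco, if_neg (Finset.ne_of_mem_erase hi)]
  have hsc : 1 ≤ ((a.symm c : Fin q) : ℕ) := asymm_val_pos a h0 hc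
  have hlt : delta a g < delta a f := by
    rw [hdf, hdg]
    have hpos : 0 < ((a.symm c : Fin q) : ℕ) * q ^ j :=
      Nat.mul_pos hsc (pow_pos Fintype.card_pos _)
    omega
  set p : F[X] := C (-c) * X ^ j with hp
  have hcneg : (-c) ≠ 0 := neg_ne_zero.mpr hc
  have hdh_lt : delta a p < delta a g := by
    calc delta a p = ((a.symm (-c) : Fin q) : ℕ) * q ^ j := delta_C_mul_X_pow a h0 hcneg j
      _ < q * q ^ j := (Nat.mul_lt_mul_right (pow_pos Fintype.card_pos j)).mpr (Fin.isLt _)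
      _ = q ^ (j + 1) := by rw [pow_succ]; ring
      _ ≤ q ^ n := Nat.pow_le_pow_right Fintype.card_pos (by omega)
      _ ≤ delta a g := by
          have := le_delta a h0 hgne
          rwa [hdegg] at this
  apply not_fixed_of_dvd a h0 hf hlt
  rw [deltaInv_delta a h0, pfact]
  have hmem2 : delta a p ∈ Finset.range (delta a g) := Finset.mem_range.mpr hdh_lt
  have hdvd := Finset.dvd_prod_of_mem (fun m => g - deltaInv a m) hmem2
  simp only [deltaInv_delta a h0] at hdvd
  have hgp : g - p = f := by
    rw [hg, hp, map_neg]
    ring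
  rwa [hgp] at hdvd

lemma not_fixed_cXn (h0 : a 0 = 0) (h1 : a 1 = 1) {c : F} (hc0 : c ≠ 0) (hc1 : c ≠ 1)
    {n : ℕ} (hn : 1 ≤ n) : S a (C c * X ^ n) ≠ C c * X ^ n := by
  have hf : C c * X ^ n ≠ 0 := mul_ne_zero (by simpa using hc0) (pow_ne_zero _ X_ne_zero)
  apply not_fixed_of_dvd a h0 hf (m := q ^ n)
  · rw [delta_C_mul_X_pow a h0 hc0]
    have h2 : 2 ≤ ((a.symm c : Fin q) : ℕ) := by
      have hne0 : 0 < ((a.symm c : Fin q) : ℕ) := asymm_val_pos a h0 hc0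
      have hne1 : ((a.symm c : Fin q) : ℕ) ≠ 1 := by
        intro h
        apply hc1
        have he : a.symm c = (1 : Fin q) := Fin.ext (by rw [h, val_one_fin Fintype.one_lt_card])
        have := congrArg a he
        rwa [Equiv.apply_symm_apply, h1] at this
      omega
    have hpos : 0 < q ^ n := pow_pos Fintype.card_pos n
    nlinarith
  · have hXn : deltaInv a (q ^ n) = X ^ n := by
      rw [← delta_X_pow a h0 h1 n, deltaInv_delta a h0]
    rw [hXn]
    have hd : (X ^ n : F[X]) ∣ pfact a (X ^ n) :=
      dvd_pfact_self a h0 (pow_ne_zero _ X_ne_zero)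
    have hu : IsUnit (C c) := Polynomial.isUnit_C.mpr (isUnit_iff_ne_zero.mpr hc0)
    rw [mul_comm]
    exact (hu.mul_right_dvd).mpr hd

lemma not_fixed_Xn (h0 : a 0 = 0) (h1 : a 1 = 1) {n : ℕ} (hn : 2 ≤ n)
    (hnq : n * q < q ^ n) : S a ((X : F[X]) ^ n) ≠ X ^ n := by
  have hf : (X : F[X]) ^ n ≠ 0 := pow_ne_zero _ X_ne_zero
  have hq1 : 1 < q := Fintype.one_lt_card
  set m : ℕ := q ^ n - 1 with hm
  have hqn : n * q ≤ m := by omega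
  have hmul : ∀ i, i < n → q * (i + 1) ≤ m := by
    intro i hi
    calc q * (i + 1) = (i + 1) * q := mul_comm _ _
      _ ≤ n * q := Nat.mul_le_mul_right _ (by omega)
      _ ≤ m := hqn
  apply not_fixed_of_dvd a h0 hf (m := m)
  · rw [delta_X_pow a h0 h1]
    have : 0 < q ^ n := pow_pos Fintype.card_pos n
    omega
  · rw [pfact_deltaInv a h0]
    set K : Finset ℕ := (Finset.range n).image (fun i => m - q * (i + 1)) with hK
    have hinj : Set.InjOn (fun i => m - q * (i + 1)) (Finset.range n) := by
      intro x hx y hy hxy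
      simp only [Finset.coe_range, Set.mem_Iio] at hx hy
      have hx1 : q * (x + 1) ≤ m := hmul x hx
      have hy1 : q * (y + 1) ≤ m := hmul y hy
      simp only at hxy
      have : q * (x + 1) = q * (y + 1) := by omega
      have := Nat.eq_of_mul_eq_mul_left Fintype.card_pos this
      omega
    have hcard : K.card = n := by
      rw [hK, Finset.card_image_of_injOn hinj, Finset.card_range]
    have hsub : K ⊆ Finset.range m := by
      intro k hk
      simp only [hK, Finset.mem_image, Finset.mem_range] at hk ⊢
      obtain ⟨i, hi, rfl⟩ := hk
      have h1' : q * (i + 1) ≤ m := hmul i hi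
      have h2' : 0 < q * (i + 1) := Nat.mul_pos Fintype.card_pos (by omega)
      omega
    have hdvdX : ∀ k ∈ K, (X : F[X]) ∣ (deltaInv a m - deltaInv a k) := by
      intro k hk
      rw [X_dvd_iff, coeff_sub, coeff_deltaInv a h0, coeff_deltaInv a h0]
      simp only [pow_zero, Nat.div_one]
      obtain ⟨i, hi, rfl⟩ := Finset.mem_image.mp hk
      have hmod : (m - q * (i + 1)) % q = m % q :=
        Nat.sub_mul_mod (hmul i (Finset.mem_range.mp hi))
      have he : (⟨(m - q * (i + 1)) % q, Nat.mod_lt _ Fintype.card_pos⟩ : Fin q)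
          = ⟨m % q, Nat.mod_lt _ Fintype.card_pos⟩ := Fin.ext hmod
      rw [he, sub_self]
    calc (X : F[X]) ^ n = ∏ _k ∈ K, (X : F[X]) := by rw [Finset.prod_const, hcard]
      _ ∣ ∏ k ∈ K, (deltaInv a m - deltaInv a k) := Finset.prod_dvd_prod_of_dvd _ _ hdvdX
      _ ∣ ∏ k ∈ Finset.range m, (deltaInv a m - deltaInv a k) :=
          Finset.prod_dvd_prod_of_subset _ _ _ hsub

lemma S_X_fixed (h0 : a 0 = 0) (h1 : a 1 = 1) : S a (X : F[X]) = X := by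
  rw [fixed_iff a h0 X_ne_zero, delta_X a h0 h1]
  intro m hm hdvd
  rw [pfact_deltaInv a h0, X_dvd_iff, coeff_zero_eq_eval_zero, Polynomial.eval_prod] at hdvd
  obtain ⟨k, hk, hzero⟩ := Finset.prod_eq_zero_iff.mp hdvd
  rw [Polynomial.eval_sub, ← coeff_zero_eq_eval_zero, ← coeff_zero_eq_eval_zero,
    sub_eq_zero, coeff_deltaInv a h0, coeff_deltaInv a h0] at hzero
  simp only [pow_zero, Nat.div_one] at hzero
  have hfin := a.injective hzero
  have hv := congrArg Fin.val hfin
  simp only at hv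
  have hkm : k < m := Finset.mem_range.mp hk
  rw [Nat.mod_eq_of_lt hm, Nat.mod_eq_of_lt (lt_trans hkm hm)] at hv
  omega

lemma deltaInv_one (h0 : a 0 = 0) (h1 : a 1 = 1) : deltaInv a 1 = 1 := by
  ext i
  rw [coeff_deltaInv a h0]
  cases i with
  | zero =>
    simp only [pow_zero, Nat.div_one]
    have he : (⟨1 % q, Nat.mod_lt _ Fintype.card_pos⟩ : Fin q) = ⟨1, Fintype.one_lt_card⟩ :=
      Fin.ext (by simp [Nat.mod_eq_of_lt Fintype.one_lt_card])
    rw [he, a_mk_one a h1 Fintype.one_lt_card]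
    simp
  | succ i =>
    have hlt : 1 < q ^ (i + 1) := by
      calc 1 < q := Fintype.one_lt_card
        _ ≤ q ^ (i + 1) := Nat.le_self_pow (by omega) q
    have hdiv : 1 / q ^ (i + 1) = 0 := Nat.div_eq_of_lt hlt
    have he : (⟨1 / q ^ (i + 1) % q, Nat.mod_lt _ Fintype.card_pos⟩ : Fin q)
        = ⟨0, Fintype.card_pos⟩ := Fin.ext (by simp [hdiv])
    rw [he, a_mk_zero a h0]
    simp [Polynomial.coeff_one]

lemma deltaInv_card (h0 : a 0 = 0) (h1 : a 1 = 1) : deltaInv a q = X := by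
  rw [← delta_X a h0 h1, deltaInv_delta a h0]

lemma delta_X_add_one (h0 : a 0 = 0) (h1 : a 1 = 1) : delta a (X + 1 : F[X]) = q + 1 := by
  have hdeg : (X + 1 : F[X]).natDegree = 1 := by
    have : (X + 1 : F[X]) = X + C 1 := by rw [map_one]
    rw [this, Polynomial.natDegree_X_add_C]
  rw [delta, hdeg]
  rw [Finset.sum_range_succ, Finset.sum_range_one]
  have hc0 : (X + 1 : F[X]).coeff 0 = 1 := by simp
  have hc1 : (X + 1 : F[X]).coeff 1 = 1 := by simp [Polynomial.coeff_one]
  rw [hc0, hc1, ← h1, Equiv.symm_apply_apply, val_one_fin Fintype.one_lt_card]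
  ring

lemma S_X2_fixed (h0 : a 0 = 0) (h1 : a 1 = 1) (hc2 : Fintype.card F = 2) :
    S a ((X : F[X]) ^ 2) = X ^ 2 := by
  have hf : (X : F[X]) ^ 2 ≠ 0 := pow_ne_zero _ X_ne_zero
  have hone : ¬ ((X : F[X]) ^ 2 ∣ 1) := by
    intro h
    rw [X_pow_dvd_iff] at h
    have := h 0 (by omega)
    simp at this
  rw [fixed_iff a h0 hf, delta_X_pow a h0 h1, hc2]
  norm_num
  intro m hm hdvd
  interval_cases m
  · rw [deltaInv_zero a h0, pfact, delta_zero a h0] at hdvd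
    simp only [Finset.range_zero, Finset.prod_empty] at hdvd
    exact hone hdvd
  · rw [pfact_deltaInv a h0] at hdvd
    rw [Finset.prod_range_one, deltaInv_one a h0 h1, deltaInv_zero a h0, sub_zero] at hdvd
    exact hone hdvd
  · have h2 : deltaInv a 2 = X := by rw [← hc2, deltaInv_card a h0 h1]
    rw [pfact_deltaInv a h0] at hdvd
    have he : ∏ k ∈ Finset.range 2, (deltaInv a 2 - deltaInv a k) = X * (X - 1) := by
      rw [Finset.prod_range_succ, Finset.prod_range_one, deltaInv_zero a h0,
        deltaInv_one a h0 h1, h2, sub_zero]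
    rw [he, pow_two] at hdvd
    have hX := (mul_dvd_mul_iff_left (X_ne_zero (R := F))).mp hdvd
    rw [X_dvd_iff] at hX
    simp at hX
  · have h2 : deltaInv a 2 = X := by rw [← hc2, deltaInv_card a h0 h1]
    have h3 : deltaInv a 3 = X + 1 := by
      have hd := delta_X_add_one a h0 h1
      rw [hc2] at hd
      rw [show (3:ℕ) = 2 + 1 from rfl, ← hd, deltaInv_delta a h0]
    rw [pfact_deltaInv a h0, h3] at hdvd
    have he : ∏ k ∈ Finset.range 3, ((X + 1 : F[X]) - deltaInv a k) = X * (X + 1) := by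
      rw [Finset.prod_range_succ, Finset.prod_range_succ, Finset.prod_range_one,
        deltaInv_zero a h0, deltaInv_one a h0 h1, h2]
      ring
    rw [he, pow_two] at hdvd
    have hX := (mul_dvd_mul_iff_left (X_ne_zero (R := F))).mp hdvd
    rw [X_dvd_iff] at hX
    simp at hX

lemma classify (h0 : a 0 = 0) (h1 : a 1 = 1) {f : F[X]} (hf : f ≠ 0) (hfix : S a f = f) :
    f = X ∨ (f = X ^ 2 ∧ Fintype.card F = 2) := by
  by_cases hdeg : f.natDegree = 0
  · exact absurd hfix (not_fixed_unit a h0 hf hdeg)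
  by_cases hmid : ∃ j < f.natDegree, f.coeff j ≠ 0
  · obtain ⟨j, hj, hcj⟩ := hmid
    exact absurd hfix (not_fixed_middle a h0 hj hcj)
  push_neg at hmid
  set n := f.natDegree with hn
  have hfn : f.coeff n ≠ 0 := by
    rw [hn, ← Polynomial.leadingCoeff]
    exact Polynomial.leadingCoeff_ne_zero.mpr hf
  have hfe : f = C (f.coeff n) * X ^ n := by
    ext i
    rw [coeff_C_mul, coeff_X_pow]
    rcases lt_trichotomy i n with h | h | h
    · rw [if_neg (by omega), mul_zero, hmid i h]
    · subst h; rw [if_pos rfl, mul_one]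
    · rw [if_neg (by omega), mul_zero, coeff_eq_zero_of_natDegree_lt (by omega)]
  by_cases hc1 : f.coeff n = 1
  · rw [hc1, map_one, one_mul] at hfe
    by_cases hn1 : n = 1
    · left; rw [hfe, hn1, pow_one]
    · have hn2 : 2 ≤ n := by omega
      by_cases hq2 : Fintype.card F = 2
      · by_cases hnn2 : n = 2
        · right; exact ⟨by rw [hfe, hnn2], hq2⟩
        · exfalso
          apply not_fixed_Xn a h0 h1 hn2
            (nq_lt_pow _ _ Fintype.one_lt_card hn2 (Or.inr (by omega)))
          rw [← hfe]; exact hfix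
      · exfalso
        have hq3 : 3 ≤ Fintype.card F := by
          have := Fintype.one_lt_card (α := F); omega
        apply not_fixed_Xn a h0 h1 hn2
          (nq_lt_pow _ _ Fintype.one_lt_card hn2 (Or.inl hq3))
        rw [← hfe]; exact hfix
  · exfalso
    apply not_fixed_cXn a h0 h1 hfn hc1 (n := n) (by omega)
    rw [← hfe]; exact hfix


end Core2

/-- Proposition 3.10: a nonzero `f` is a fixed point of `S` iff `f = t` (when `q > 2`),
and iff `f = t` or `f = t²` (when `q = 2`). -/
theorem smarandache_fixed_points (a : Fin (Fintype.card F) ≃ F) (h0 : a 0 = 0)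
    (h1 : a 1 = 1) (f : F[X]) (hf : f ≠ 0) :
    (2 < Fintype.card F → (S a f = f ↔ f = X)) ∧
    (Fintype.card F = 2 → (S a f = f ↔ f = X ∨ f = X ^ 2)) := by
  constructor
  · intro hq3
    constructor
    · intro hfix
      rcases classify a h0 h1 hf hfix with h | ⟨_, h2⟩
      · exact h
      · omega
    · rintro rfl
      exact S_X_fixed a h0 h1
  · intro hc2
    constructor
    · intro hfix
      rcases classify a h0 h1 hf hfix with h | ⟨h, _⟩
      · exact Or.inl h
      · exact Or.inr h
    · rintro (rfl | rfl)
      · exact S_X_fixed a h0 h1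
      · exact S_X2_fixed a h0 h1 hc2
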